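/- For every n ≥ 0 and every subset I ⊆ [n], the entry A'_n(I, [n] \ I) of the matrix A'_n = U_n A_n V_n equals π(I). -/
import Mathlib


open Finset Polynomial
open scoped Classical

namespace AR

/-- `binVal I = r_n(I) - 1 = Σ_{i ∈ I} 2^(i-1)`. -/
def binVal (I : Finset ℕ) : ℕ := ∑ i ∈ I, 2 ^ (i - 1)

lemma binVal_Icc (m : ℕ) : binVal (Finset.Icc 1 m) = 2 ^ m - 1 := by
  induction m with
  | zero => simp [binVal]
  | succ k ih =>
      rw [binVal, Finset.sum_Icc_succ_top (by omega)]
      rw [binVal] at ih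
      rw [ih]
      have h1 : 1 ≤ 2 ^ k := Nat.one_le_two_pow
      simp only [Nat.add_sub_cancel, pow_succ]
      omega

lemma binVal_lt {n : ℕ} {I : Finset ℕ} (h : I ⊆ Finset.Icc 1 n) : binVal I < 2 ^ n := by
  have h1 : binVal I ≤ binVal (Finset.Icc 1 n) :=
    Finset.sum_le_sum_of_subset h
  have h2 := binVal_Icc n
  have h3 : 1 ≤ 2 ^ n := Nat.one_le_two_pow
  omega

/-- The row/column index (zero-based, i.e. `r_n(I) - 1`) corresponding to a subset `I ⊆ [n]`. -/
def idx (n : ℕ) (I : Finset ℕ) (h : I ⊆ Finset.Icc 1 n) : Fin (2 ^ n) :=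
  ⟨binVal I, binVal_lt h⟩

def blockEquiv (n : ℕ) : Fin (2 ^ n) ⊕ Fin (2 ^ n) ≃ Fin (2 ^ (n + 1)) :=
  finSumFinEquiv.trans (finCongr (by rw [pow_succ, mul_two]))

/-- The pair of Adin–Roichman matrices `(A_n, B_n)`, defined recursively. -/
def ABpair : (n : ℕ) → Matrix (Fin (2 ^ n)) (Fin (2 ^ n)) ℤ × Matrix (Fin (2 ^ n)) (Fin (2 ^ n)) ℤ
  | 0 => (Matrix.of fun _ _ => 1, Matrix.of fun _ _ => 1)
  | n + 1 =>
      let p := ABpair n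
      ((Matrix.reindex (blockEquiv n) (blockEquiv n)) (Matrix.fromBlocks p.1 p.1 p.1 (-p.2)),
       (Matrix.reindex (blockEquiv n) (blockEquiv n)) (Matrix.fromBlocks p.1 p.1 0 (-p.2)))

def A (n : ℕ) : Matrix (Fin (2 ^ n)) (Fin (2 ^ n)) ℤ := (ABpair n).1

def B (n : ℕ) : Matrix (Fin (2 ^ n)) (Fin (2 ^ n)) ℤ := (ABpair n).2

/-- `R` is a (nonempty) integer interval. -/
def IsInterval (R : Finset ℕ) : Prop := ∃ a b : ℕ, R = Finset.Icc a b

/-- `R` is a run of `I`: a maximal nonempty interval contained in `I`. -/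
def IsRun (I R : Finset ℕ) : Prop :=
  R.Nonempty ∧ IsInterval R ∧ R ⊆ I ∧
    ∀ S : Finset ℕ, IsInterval S → S ⊆ I → R ⊆ S → S = R

/-- `R` is a prefix of `S` : `min R = min S` and `R ⊆ S`. -/
def IsPrefixOf (R S : Finset ℕ) : Prop := R.min = S.min ∧ R ⊆ S

/-- `I ≫ J` : every run of `I ∩ J` is a prefix of a run of `I`. -/
def Gg (I J : Finset ℕ) : Prop :=
  ∀ R : Finset ℕ, IsRun (I ∩ J) R → ∃ S : Finset ℕ, IsRun I S ∧ IsPrefixOf R S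

/-- The set of runs of `I`. -/
noncomputable def runs (I : Finset ℕ) : Finset (Finset ℕ) :=
  I.powerset.filter (fun R => IsRun I R)

/-- `π(I)`: the product of (size + 1) over the runs of `I`. -/
noncomputable def piFun (I : Finset ℕ) : ℕ := ∏ R ∈ runs I, (R.card + 1)

/-- `π'_n(I)`: the product of (size + 1) over the runs of `I` not containing `n`. -/
noncomputable def piFun' (n : ℕ) (I : Finset ℕ) : ℕ :=
  ∏ R ∈ (runs I).filter (fun R => n ∉ R), (R.card + 1)

/-- The subset of `[n]` encoded by a zero-based index `i : Fin (2^n)` (binary digits). -/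
def decode (n : ℕ) (i : Fin (2 ^ n)) : Finset ℕ :=
  (Finset.Icc 1 n).filter (fun k => Nat.testBit i.val (k - 1))

/-- The matrix `U_n`, with `U_n(I,J) = 1` if `I ⊇ J` and `0` otherwise. -/
def U (n : ℕ) : Matrix (Fin (2 ^ n)) (Fin (2 ^ n)) ℤ :=
  Matrix.of fun i j => if decode n j ⊆ decode n i then 1 else 0

/-- The matrix `V_n = U_n⁻¹`, with `V_n(I,J) = (-1)^{|I \ J|}` if `I ⊇ J` and `0` otherwise. -/
def V (n : ℕ) : Matrix (Fin (2 ^ n)) (Fin (2 ^ n)) ℤ :=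
  Matrix.of fun i j =>
    if decode n j ⊆ decode n i then (-1) ^ ((decode n i) \ (decode n j)).card else 0

def A' (n : ℕ) : Matrix (Fin (2 ^ n)) (Fin (2 ^ n)) ℤ := U n * A n * V n

def B' (n : ℕ) : Matrix (Fin (2 ^ n)) (Fin (2 ^ n)) ℤ := U n * B n * V n

/-- `E ⪯ I` : `E ⊆ I`, `E` contains no minimal element of a run of `I`,
and `E` contains no two consecutive integers. -/
def SubPrec (E I : Finset ℕ) : Prop :=
  E ⊆ I ∧ (∀ R : Finset ℕ, (h : IsRun I R) → R.min' h.1 ∉ E) ∧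
    ∀ i : ℕ, ¬ (i ∈ E ∧ i + 1 ∈ E)

/-- `I ⇝ J` : `J = ([n] \ I) ∪ E` for some `E ⪯ I`. -/
def Step (n : ℕ) (I J : Finset ℕ) : Prop :=
  ∃ E : Finset ℕ, SubPrec E I ∧ J = (Finset.Icc 1 n \ I) ∪ E

/-- `π_μ` for a composition `μ` of `n`. -/
def piComp {n : ℕ} (μ : Composition n) : ℕ := (μ.blocks.map (· + 1)).prod

/-- `π'_μ` for a composition `μ` of `n`. -/
def piComp' {n : ℕ} (μ : Composition n) : ℕ := (μ.blocks.dropLast.map (· + 1)).prod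

/-- The Thue–Morse sequence: `thueMorse m = s₂(m) % 2`. -/
def thueMorse (m : ℕ) : ℕ := (Nat.digits 2 m).sum % 2

section Decode

variable {n : ℕ}

lemma blockEquiv_inl_val (i : Fin (2 ^ n)) : (blockEquiv n (Sum.inl i)).val = i.val := rfl

lemma blockEquiv_inr_val (i : Fin (2 ^ n)) : (blockEquiv n (Sum.inr i)).val = 2 ^ n + i.val := rfl

lemma decode_subset (i : Fin (2 ^ n)) : decode n i ⊆ Finset.Icc 1 n :=
  Finset.filter_subset _ _

lemma not_mem_decode (i : Fin (2 ^ n)) : n + 1 ∉ decode n i := by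
  intro h
  have := decode_subset i h
  simp [Finset.mem_Icc] at this

lemma decode_inl (i : Fin (2 ^ n)) :
    decode (n + 1) (blockEquiv n (Sum.inl i)) = decode n i := by
  unfold decode
  rw [show Finset.Icc 1 (n + 1) = insert (n + 1) (Finset.Icc 1 n) by
    ext x; simp only [Finset.mem_insert, Finset.mem_Icc]; omega]
  rw [Finset.filter_insert]
  have hb : Nat.testBit (blockEquiv n (Sum.inl i)).val n = false := by
    rw [blockEquiv_inl_val]
    exact Nat.testBit_lt_two_pow i.isLt
  rw [if_neg (by simp [hb])]
  apply Finset.filter_congr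
  intro k hk
  simp only [Finset.mem_Icc] at hk
  rw [blockEquiv_inl_val]

lemma decode_inr (i : Fin (2 ^ n)) :
    decode (n + 1) (blockEquiv n (Sum.inr i)) = insert (n + 1) (decode n i) := by
  unfold decode
  rw [show Finset.Icc 1 (n + 1) = insert (n + 1) (Finset.Icc 1 n) by
    ext x; simp only [Finset.mem_insert, Finset.mem_Icc]; omega]
  rw [Finset.filter_insert]
  have hb : Nat.testBit (blockEquiv n (Sum.inr i)).val n = true := by
    rw [blockEquiv_inr_val]
    rw [Nat.testBit_two_pow_add_eq, Nat.testBit_lt_two_pow i.isLt]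
    rfl
  rw [if_pos (by simp [hb])]
  congr 1
  apply Finset.filter_congr
  intro k hk
  simp only [Finset.mem_Icc] at hk
  rw [blockEquiv_inr_val]
  rw [Nat.testBit_two_pow_add_gt (by omega)]

lemma erase_subset_Icc {I : Finset ℕ} (hI : I ⊆ Finset.Icc 1 (n + 1)) :
    I.erase (n + 1) ⊆ Finset.Icc 1 n := by
  intro x hx
  have h1 := Finset.mem_of_mem_erase hx
  have h2 := Finset.ne_of_mem_erase hx
  have := hI h1
  simp only [Finset.mem_Icc] at this ⊢
  omega

lemma idx_inl {I : Finset ℕ} (hI : I ⊆ Finset.Icc 1 n) (h' : I ⊆ Finset.Icc 1 (n + 1)) :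
    idx (n + 1) I h' = blockEquiv n (Sum.inl (idx n I hI)) := by
  apply Fin.ext
  rw [blockEquiv_inl_val]
  rfl

lemma idx_inr {I : Finset ℕ} (hm : n + 1 ∈ I) (h' : I ⊆ Finset.Icc 1 (n + 1)) :
    idx (n + 1) I h' = blockEquiv n (Sum.inr (idx n (I.erase (n + 1)) (erase_subset_Icc h'))) := by
  apply Fin.ext
  rw [blockEquiv_inr_val]
  show binVal I = 2 ^ n + binVal (I.erase (n + 1))
  unfold binVal
  rw [← Finset.add_sum_erase _ _ hm]
  simp

lemma decode_idx : ∀ (n : ℕ) (I : Finset ℕ) (hI : I ⊆ Finset.Icc 1 n),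
    decode n (idx n I hI) = I := by
  intro n
  induction n with
  | zero =>
      intro I hI
      have : I = ∅ := by simpa [Finset.subset_empty] using hI
      subst this
      simp [decode]
  | succ k ih =>
      intro I hI
      by_cases hm : k + 1 ∈ I
      · rw [idx_inr hm hI, decode_inr, ih]
        exact Finset.insert_erase hm
      · have hI' : I ⊆ Finset.Icc 1 k := by
          intro x hx
          have := hI hx
          simp only [Finset.mem_Icc] at this ⊢
          have : x ≠ k + 1 := fun h => hm (h ▸ hx)
          omega
        rw [idx_inl hI' hI, decode_inl, ih]

end Decode
section Blocks

variable {n : ℕ}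

local notation "e" => blockEquiv n

lemma U_block : U (n + 1) =
    Matrix.reindex (blockEquiv n) (blockEquiv n)
      (Matrix.fromBlocks (U n) 0 (U n) (U n)) := by
  have : ∀ si sj, U (n + 1) (e si) (e sj) = Matrix.fromBlocks (U n) 0 (U n) (U n) si sj := by
    rintro (i | i) (j | j)
    · simp [U, decode_inl]
    · simp only [U, Matrix.of_apply, decode_inl, decode_inr, Matrix.fromBlocks_apply₁₂]
      rw [if_neg]
      · rfl
      · intro h
        exact not_mem_decode i (h (Finset.mem_insert_self _ _))
    · simp only [U, Matrix.of_apply, decode_inl, decode_inr, Matrix.fromBlocks_apply₂₁]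
      congr 1
      simp only [eq_iff_iff]
      constructor
      · intro h x hx
        rcases Finset.mem_insert.mp (h hx) with h1 | h1
        · exact absurd (h1 ▸ hx) (not_mem_decode j)
        · exact h1
      · intro h
        exact h.trans (Finset.subset_insert _ _)
    · simp only [U, Matrix.of_apply, decode_inl, decode_inr, Matrix.fromBlocks_apply₂₂]
      congr 1
      simp only [eq_iff_iff]
      constructor
      · intro h x hx
        rcases Finset.mem_insert.mp (h (Finset.mem_insert_of_mem hx)) with h1 | h1
        · exact absurd (h1 ▸ hx) (not_mem_decode j)
        · exact h1
      · intro h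
        exact Finset.insert_subset_insert _ h
  ext i j
  rw [show i = e ((blockEquiv n).symm i) by simp, show j = e ((blockEquiv n).symm j) by simp,
    this]
  simp

lemma sdiff_insert_insert {X Y : Finset ℕ} (a : ℕ) (hX : a ∉ X) (hY : a ∉ Y) :
    (insert a X) \ (insert a Y) = X \ Y := by
  ext x
  simp only [Finset.mem_sdiff, Finset.mem_insert]
  constructor
  · rintro ⟨h1 | h1, h2⟩
    · exact absurd (Or.inl h1) h2
    · exact ⟨h1, fun hx => h2 (Or.inr hx)⟩
  · rintro ⟨h1, h2⟩
    exact ⟨Or.inr h1, fun hx => hx.elim (fun hh => hX (hh ▸ h1)) h2⟩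

lemma V_block : V (n + 1) =
    Matrix.reindex (blockEquiv n) (blockEquiv n)
      (Matrix.fromBlocks (V n) 0 (-(V n)) (V n)) := by
  have : ∀ si sj, V (n + 1) (e si) (e sj) = Matrix.fromBlocks (V n) 0 (-(V n)) (V n) si sj := by
    rintro (i | i) (j | j)
    · simp [V, decode_inl]
    · simp only [V, Matrix.of_apply, decode_inl, decode_inr, Matrix.fromBlocks_apply₁₂]
      rw [if_neg]
      · rfl
      · intro h
        exact not_mem_decode i (h (Finset.mem_insert_self _ _))
    · simp only [V, Matrix.of_apply, decode_inl, decode_inr, Matrix.fromBlocks_apply₂₁,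
        Matrix.neg_apply]
      have hsub : decode n j ⊆ insert (n + 1) (decode n i) ↔ decode n j ⊆ decode n i := by
        constructor
        · intro h x hx
          rcases Finset.mem_insert.mp (h hx) with h1 | h1
          · exact absurd (h1 ▸ hx) (not_mem_decode j)
          · exact h1
        · intro h
          exact h.trans (Finset.subset_insert _ _)
      by_cases h : decode n j ⊆ decode n i
      · rw [if_pos (hsub.mpr h), if_pos h]
        have : (insert (n + 1) (decode n i)) \ decode n j
            = insert (n + 1) (decode n i \ decode n j) := by
          rw [Finset.insert_sdiff_of_notMem _ (not_mem_decode j)]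
        rw [this, Finset.card_insert_of_notMem (fun hx => not_mem_decode i (Finset.mem_sdiff.mp hx).1)]
        ring
      · rw [if_neg (fun hh => h (hsub.mp hh)), if_neg h]
        ring
    · simp only [V, Matrix.of_apply, decode_inl, decode_inr, Matrix.fromBlocks_apply₂₂]
      have hsub : insert (n + 1) (decode n j) ⊆ insert (n + 1) (decode n i)
          ↔ decode n j ⊆ decode n i := by
        constructor
        · intro h x hx
          rcases Finset.mem_insert.mp (h (Finset.mem_insert_of_mem hx)) with h1 | h1
          · exact absurd (h1 ▸ hx) (not_mem_decode j)
          · exact h1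
        · intro h
          exact Finset.insert_subset_insert _ h
      by_cases h : decode n j ⊆ decode n i
      · rw [if_pos (hsub.mpr h), if_pos h,
          sdiff_insert_insert _ (not_mem_decode i) (not_mem_decode j)]
      · rw [if_neg (fun hh => h (hsub.mp hh)), if_neg h]
  ext i j
  rw [show i = e ((blockEquiv n).symm i) by simp, show j = e ((blockEquiv n).symm j) by simp,
    this]
  simp

lemma A_block : A (n + 1) =
    Matrix.reindex (blockEquiv n) (blockEquiv n)
      (Matrix.fromBlocks (A n) (A n) (A n) (-(B n))) := rfl

lemma B_block : B (n + 1) =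
    Matrix.reindex (blockEquiv n) (blockEquiv n)
      (Matrix.fromBlocks (A n) (A n) 0 (-(B n))) := rfl

lemma reindex_mul {m k : ℕ} (f : Fin m ⊕ Fin m ≃ Fin k)
    (M N : Matrix (Fin m ⊕ Fin m) (Fin m ⊕ Fin m) ℤ) :
    (Matrix.reindex f f M) * (Matrix.reindex f f N) = Matrix.reindex f f (M * N) := by
  simp only [Matrix.reindex_apply]
  exact Matrix.submatrix_mul_equiv M N _ _ _

lemma A'_block : A' (n + 1) =
    Matrix.reindex (blockEquiv n) (blockEquiv n)
      (Matrix.fromBlocks 0 (A' n) (A' n + B' n) (A' n - B' n)) := by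
  rw [A', U_block, A_block, V_block, reindex_mul, reindex_mul,
    Matrix.fromBlocks_multiply, Matrix.fromBlocks_multiply,
    show (U n * A n + 0 * A n) * V n + (U n * A n + 0 * (-B n)) * (-V n)
      = (0 : Matrix (Fin (2 ^ n)) (Fin (2 ^ n)) ℤ) by noncomm_ring,
    show (U n * A n + 0 * A n) * 0 + (U n * A n + 0 * (-B n)) * V n = A' n by
      simp only [A']; noncomm_ring,
    show (U n * A n + U n * A n) * V n + (U n * A n + U n * (-B n)) * (-V n) = A' n + B' n by
      simp only [A', B']; noncomm_ring,
    show (U n * A n + U n * A n) * 0 + (U n * A n + U n * (-B n)) * V n = A' n - B' n by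
      simp only [A', B']; noncomm_ring]

lemma B'_block : B' (n + 1) =
    Matrix.reindex (blockEquiv n) (blockEquiv n)
      (Matrix.fromBlocks 0 (A' n) (B' n) (A' n - B' n)) := by
  rw [B', U_block, B_block, V_block, reindex_mul, reindex_mul,
    Matrix.fromBlocks_multiply, Matrix.fromBlocks_multiply,
    show (U n * A n + 0 * 0) * V n + (U n * A n + 0 * (-B n)) * (-V n)
      = (0 : Matrix (Fin (2 ^ n)) (Fin (2 ^ n)) ℤ) by noncomm_ring,
    show (U n * A n + 0 * 0) * 0 + (U n * A n + 0 * (-B n)) * V n = A' n by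
      simp only [A']; noncomm_ring,
    show (U n * A n + U n * 0) * V n + (U n * A n + U n * (-B n)) * (-V n) = B' n by
      simp only [B']; noncomm_ring,
    show (U n * A n + U n * 0) * 0 + (U n * A n + U n * (-B n)) * V n = A' n - B' n by
      simp only [A', B']; noncomm_ring]

lemma reindex_apply_apply {m k : ℕ} (f : Fin m ⊕ Fin m ≃ Fin k)
    (M : Matrix (Fin m ⊕ Fin m) (Fin m ⊕ Fin m) ℤ) (si sj : Fin m ⊕ Fin m) :
    (Matrix.reindex f f M) (f si) (f sj) = M si sj := by
  simp

end Blocks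
section Runs

lemma mem_runs {I R : Finset ℕ} : R ∈ runs I ↔ IsRun I R := by
  constructor
  · intro h
    exact (Finset.mem_filter.mp h).2
  · intro h
    exact Finset.mem_filter.mpr ⟨Finset.mem_powerset.mpr h.2.2.1, h⟩

lemma isRun_iff {I R : Finset ℕ} (h0 : 0 ∉ I) :
    IsRun I R ↔ ∃ a b : ℕ, a ≤ b ∧ R = Finset.Icc a b ∧ Finset.Icc a b ⊆ I ∧
      a - 1 ∉ I ∧ b + 1 ∉ I := by
  constructor
  · rintro ⟨hne, ⟨a, b, rfl⟩, hsub, hmax⟩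
    have hab : a ≤ b := by
      rcases hne with ⟨x, hx⟩
      simp only [Finset.mem_Icc] at hx
      omega
    have ha : a ∈ I := hsub (by simp [Finset.mem_Icc, hab])
    have ha1 : 1 ≤ a := by
      rcases Nat.eq_zero_or_pos a with h | h
      · exact absurd (h ▸ ha) h0
      · omega
    refine ⟨a, b, hab, rfl, hsub, ?_, ?_⟩
    · intro hcon
      have heq : Finset.Icc (a - 1) b = Finset.Icc a b := by
        apply hmax _ ⟨a - 1, b, rfl⟩
        · intro x hx
          simp only [Finset.mem_Icc] at hx
          have : x = a - 1 ∨ (a ≤ x ∧ x ≤ b) := by omega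
          rcases this with rfl | hx'
          · exact hcon
          · exact hsub (by simp [Finset.mem_Icc, hx'])
        · exact Finset.Icc_subset_Icc (by omega) le_rfl
      have : a - 1 ∈ Finset.Icc a b := heq ▸ (by simp [Finset.mem_Icc]; omega)
      simp only [Finset.mem_Icc] at this
      omega
    · intro hcon
      have heq : Finset.Icc a (b + 1) = Finset.Icc a b := by
        apply hmax _ ⟨a, b + 1, rfl⟩
        · intro x hx
          simp only [Finset.mem_Icc] at hx
          have : x = b + 1 ∨ (a ≤ x ∧ x ≤ b) := by omega
          rcases this with rfl | hx'
          · exact hcon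
          · exact hsub (by simp [Finset.mem_Icc, hx'])
        · exact Finset.Icc_subset_Icc le_rfl (by omega)
      have : b + 1 ∈ Finset.Icc a b := heq ▸ (by simp [Finset.mem_Icc]; omega)
      simp only [Finset.mem_Icc] at this
      omega
  · rintro ⟨a, b, hab, rfl, hsub, ha, hb⟩
    have haI : a ∈ I := hsub (by simp [Finset.mem_Icc, hab])
    have hbI : b ∈ I := hsub (by simp [Finset.mem_Icc, hab])
    have ha1 : 1 ≤ a := by
      rcases Nat.eq_zero_or_pos a with h | h
      · exact absurd (h ▸ haI) h0
      · omega
    refine ⟨Finset.nonempty_Icc.mpr hab, ⟨a, b, rfl⟩, hsub, ?_⟩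
    rintro S ⟨c, d, rfl⟩ hSsub hRS
    have hac : c ≤ a ∧ a ≤ d := by
      have := hRS (by simp [Finset.mem_Icc, hab] : a ∈ Finset.Icc a b)
      simpa [Finset.mem_Icc] using this
    have hbd : c ≤ b ∧ b ≤ d := by
      have := hRS (by simp [Finset.mem_Icc, hab] : b ∈ Finset.Icc a b)
      simpa [Finset.mem_Icc] using this
    have hca : c = a := by
      by_contra hne
      have hlt : c < a := lt_of_le_of_ne hac.1 hne
      have : a - 1 ∈ I := hSsub (by simp [Finset.mem_Icc]; omega)
      exact ha this
    have hdb : d = b := by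
      by_contra hne
      have hlt : b < d := lt_of_le_of_ne hbd.2 (fun h => hne h.symm)
      have : b + 1 ∈ I := hSsub (by simp [Finset.mem_Icc]; omega)
      exact hb this
    rw [hca, hdb]

lemma run_unique {I R S : Finset ℕ} {i : ℕ} (hR : IsRun I R) (hS : IsRun I S)
    (hiR : i ∈ R) (hiS : i ∈ S) : R = S := by
  obtain ⟨a, b, rfl⟩ := hR.2.1
  obtain ⟨c, d, rfl⟩ := hS.2.1
  simp only [Finset.mem_Icc] at hiR hiS
  have hT : Finset.Icc (min a c) (max b d) ⊆ I := by
    intro x hx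
    simp only [Finset.mem_Icc] at hx
    have : (a ≤ x ∧ x ≤ b) ∨ (c ≤ x ∧ x ≤ d) := by omega
    rcases this with h | h
    · exact hR.2.2.1 (by simp [Finset.mem_Icc, h])
    · exact hS.2.2.1 (by simp [Finset.mem_Icc, h])
  have h1 := hR.2.2.2 _ ⟨min a c, max b d, rfl⟩ hT
    (Finset.Icc_subset_Icc (by omega) (by omega))
  have h2 := hS.2.2.2 _ ⟨min a c, max b d, rfl⟩ hT
    (Finset.Icc_subset_Icc (by omega) (by omega))
  rw [← h1]
  exact h2

lemma exists_run_mem {I : Finset ℕ} {i : ℕ} (h0 : 0 ∉ I) (hi : i ∈ I) :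
    ∃ R : Finset ℕ, IsRun I R ∧ i ∈ R := by
  have hex_a : ∃ a : ℕ, Finset.Icc a i ⊆ I := ⟨i, by
    intro x hx; simp only [Finset.mem_Icc] at hx
    have : x = i := by omega
    exact this ▸ hi⟩
  set a := Nat.find hex_a with ha_def
  have haspec : Finset.Icc a i ⊆ I := Nat.find_spec hex_a
  have hai : a ≤ i := Nat.find_le (by
    intro x hx
    simp only [Finset.mem_Icc] at hx
    have : x = i := by omega
    exact this ▸ hi)
  have haI : a ∈ I := haspec (by simp [Finset.mem_Icc, hai])
  have ha1 : 1 ≤ a := by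
    rcases Nat.eq_zero_or_pos a with h | h
    · exact absurd (h ▸ haI) h0
    · omega
  have ha_pred : a - 1 ∉ I := by
    intro hcon
    have : Finset.Icc (a - 1) i ⊆ I := by
      intro x hx
      simp only [Finset.mem_Icc] at hx
      have : x = a - 1 ∨ (a ≤ x ∧ x ≤ i) := by omega
      rcases this with rfl | hx'
      · exact hcon
      · exact haspec (by simp [Finset.mem_Icc, hx'])
    have : Nat.find hex_a ≤ a - 1 := Nat.find_le this
    omega
  have hex_t : ∃ t : ℕ, i + t + 1 ∉ I := by
    refine ⟨I.sup id, fun hcon => ?_⟩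
    have := Finset.le_sup (f := id) hcon
    simp only [id] at this
    omega
  set t := Nat.find hex_t with ht_def
  have htspec : i + t + 1 ∉ I := Nat.find_spec hex_t
  set b := i + t with hb_def
  have hbspec : Finset.Icc i b ⊆ I := by
    intro x hx
    simp only [Finset.mem_Icc] at hx
    rcases Nat.eq_or_lt_of_le hx.1 with h | h
    · exact h ▸ hi
    · have hs : x - i - 1 < t := by omega
      have := Nat.find_min hex_t hs
      simp only [not_not] at this
      have : i + (x - i - 1) + 1 = x := by omega
      rwa [← this]
  refine ⟨Finset.Icc a b, ?_, by simp [Finset.mem_Icc]; omega⟩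
  rw [isRun_iff h0]
  refine ⟨a, b, by omega, rfl, ?_, ha_pred, by rwa [show b + 1 = i + t + 1 by omega]⟩
  intro x hx
  simp only [Finset.mem_Icc] at hx
  rcases le_or_gt x i with h | h
  · exact haspec (by simp [Finset.mem_Icc]; omega)
  · exact hbspec (by simp [Finset.mem_Icc]; omega)

end Runs
section InsertRuns

variable {m : ℕ} {I : Finset ℕ}

lemma zero_not_mem (hI : I ⊆ Finset.Icc 1 m) : 0 ∉ I := fun h => by
  have := hI h; simp [Finset.mem_Icc] at this

lemma mem_le (hI : I ⊆ Finset.Icc 1 m) {x : ℕ} (hx : x ∈ I) : 1 ≤ x ∧ x ≤ m := by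
  have := hI hx; simpa [Finset.mem_Icc] using this

lemma zero_not_mem_insert (hI : I ⊆ Finset.Icc 1 m) : 0 ∉ insert (m + 1) I := by
  simp only [Finset.mem_insert, not_or]
  exact ⟨by omega, zero_not_mem hI⟩

lemma succ_not_mem (hI : I ⊆ Finset.Icc 1 m) : m + 1 ∉ I := fun h => by
  have := mem_le hI h; omega

lemma succ2_not_mem (hI : I ⊆ Finset.Icc 1 m) : m + 2 ∉ I := fun h => by
  have := mem_le hI h; omega

lemma isRun_insert_iff_not_mem (hI : I ⊆ Finset.Icc 1 m) (hm : m ∉ I) (R : Finset ℕ) :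
    IsRun (insert (m + 1) I) R ↔ R = {m + 1} ∨ IsRun I R := by
  have h0I : 0 ∉ I := zero_not_mem hI
  have h0J : 0 ∉ insert (m + 1) I := zero_not_mem_insert hI
  constructor
  · intro h
    rw [isRun_iff h0J] at h
    obtain ⟨a, b, hab, rfl, hsub, ha, hb⟩ := h
    by_cases hmem : m + 1 ∈ Finset.Icc a b
    · left
      simp only [Finset.mem_Icc] at hmem
      have hbJ : b ∈ insert (m + 1) I := hsub (by simp [Finset.mem_Icc, hab])
      have hb_le : b ≤ m + 1 := by
        rcases Finset.mem_insert.mp hbJ with h1 | h1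
        · omega
        · have := mem_le hI h1; omega
      have hbm : b = m + 1 := by omega
      have ham : a = m + 1 := by
        by_contra hne
        have halt : a ≤ m := by omega
        have : m ∈ insert (m + 1) I := hsub (by simp [Finset.mem_Icc]; omega)
        rcases Finset.mem_insert.mp this with h1 | h1
        · omega
        · exact hm h1
      subst hbm; subst ham
      simp
    · right
      have hsub' : Finset.Icc a b ⊆ I := by
        intro x hx
        rcases Finset.mem_insert.mp (hsub hx) with h1 | h1
        · exact absurd (h1 ▸ hx) hmem
        · exact h1
      rw [isRun_iff h0I]
      exact ⟨a, b, hab, rfl, hsub',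
        fun hc => ha (Finset.mem_insert_of_mem hc),
        fun hc => hb (Finset.mem_insert_of_mem hc)⟩
  · rintro (rfl | h)
    · rw [isRun_iff h0J]
      refine ⟨m + 1, m + 1, le_rfl, (Finset.Icc_self _).symm, ?_, ?_, ?_⟩
      · intro x hx
        simp only [Finset.mem_Icc] at hx
        have : x = m + 1 := by omega
        simp [this]
      · simp only [Finset.mem_insert, not_or]
        exact ⟨by omega, by simpa using hm⟩
      · simp only [Finset.mem_insert, not_or]
        exact ⟨by omega, succ2_not_mem hI⟩
    · rw [isRun_iff h0I] at h
      obtain ⟨a, b, hab, rfl, hsub, ha, hb⟩ := h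
      have haI := mem_le hI (hsub (show a ∈ Finset.Icc a b by simp [Finset.mem_Icc, hab]))
      have hbI := mem_le hI (hsub (show b ∈ Finset.Icc a b by simp [Finset.mem_Icc, hab]))
      have hbm : b ≠ m := fun hc =>
        hm (hc ▸ hsub (show b ∈ Finset.Icc a b by simp [Finset.mem_Icc, hab]))
      rw [isRun_iff h0J]
      refine ⟨a, b, hab, rfl, fun x hx => Finset.mem_insert_of_mem (hsub hx), ?_, ?_⟩
      · simp only [Finset.mem_insert, not_or]
        exact ⟨by omega, ha⟩
      · simp only [Finset.mem_insert, not_or]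
        exact ⟨by omega, hb⟩

lemma isRun_insert_iff_mem (hI : I ⊆ Finset.Icc 1 m) (hm : m ∈ I) {R₀ : Finset ℕ}
    (h₀ : IsRun I R₀) (hm0 : m ∈ R₀) (R : Finset ℕ) :
    IsRun (insert (m + 1) I) R ↔ R = insert (m + 1) R₀ ∨ (IsRun I R ∧ R ≠ R₀) := by
  have h0I : 0 ∉ I := zero_not_mem hI
  have h0J : 0 ∉ insert (m + 1) I := zero_not_mem_insert hI
  obtain ⟨a, b, hab, hR0, hsub0, ha0, hb0⟩ := (isRun_iff h0I).mp h₀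
  have hbm : b = m := by
    have h1 : m ≤ b := by
      rw [hR0] at hm0; simp only [Finset.mem_Icc] at hm0; omega
    have h2 := mem_le hI (hsub0 (show b ∈ Finset.Icc a b by simp [Finset.mem_Icc, hab]))
    omega
  rw [hbm] at hR0 hsub0 hb0 hab
  have ham : a ≤ m := hab
  have hR1eq : insert (m + 1) R₀ = Finset.Icc a (m + 1) := by
    rw [hR0]
    ext x
    simp only [Finset.mem_insert, Finset.mem_Icc]
    omega
  have hrun1 : IsRun (insert (m + 1) I) (insert (m + 1) R₀) := by
    rw [hR1eq, isRun_iff h0J]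
    refine ⟨a, m + 1, by omega, rfl, ?_, ?_, ?_⟩
    · intro x hx
      simp only [Finset.mem_Icc] at hx
      rcases Nat.lt_or_ge x (m + 1) with h | h
      · exact Finset.mem_insert_of_mem (hsub0 (by simp [Finset.mem_Icc]; omega))
      · have : x = m + 1 := by omega
        simp [this]
    · simp only [Finset.mem_insert, not_or]
      exact ⟨by omega, ha0⟩
    · simp only [Finset.mem_insert, not_or]
      exact ⟨by omega, succ2_not_mem hI⟩
  constructor
  · intro h
    by_cases hx : m + 1 ∈ R
    · exact Or.inl (run_unique h hrun1 hx (Finset.mem_insert_self _ _))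
    · right
      rw [isRun_iff h0J] at h
      obtain ⟨c, d, hcd, rfl, hsub, hc, hd⟩ := h
      have hmem : m + 1 ∉ Finset.Icc c d := hx
      have hsub' : Finset.Icc c d ⊆ I := by
        intro y hy
        rcases Finset.mem_insert.mp (hsub hy) with h1 | h1
        · exact absurd (h1 ▸ hy) hmem
        · exact h1
      constructor
      · rw [isRun_iff h0I]
        exact ⟨c, d, hcd, rfl, hsub',
          fun hcc => hc (Finset.mem_insert_of_mem hcc),
          fun hcc => hd (Finset.mem_insert_of_mem hcc)⟩
      · intro heq
        have hdm : d = m := by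
          have h1 : m ≤ d := by
            have : m ∈ Finset.Icc c d := heq ▸ (hR0 ▸ hm0)
            simp only [Finset.mem_Icc] at this; omega
          have h2 := mem_le hI (hsub' (show d ∈ Finset.Icc c d by simp [Finset.mem_Icc, hcd]))
          omega
        apply hd
        rw [hdm]
        exact Finset.mem_insert_self _ _
  · rintro (rfl | ⟨h, hne⟩)
    · exact hrun1
    · have hmR : m ∉ R := fun hc => hne (run_unique h h₀ hc hm0)
      rw [isRun_iff h0I] at h
      obtain ⟨c, d, hcd, rfl, hsub, hc, hd⟩ := h
      have hdI := mem_le hI (hsub (show d ∈ Finset.Icc c d by simp [Finset.mem_Icc, hcd]))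
      have hdm : d ≠ m := fun hdd => hmR (by simp [Finset.mem_Icc]; omega)
      rw [isRun_iff h0J]
      refine ⟨c, d, hcd, rfl, fun x hx => Finset.mem_insert_of_mem (hsub hx), ?_, ?_⟩
      · have hcI := mem_le hI (hsub (show c ∈ Finset.Icc c d by simp [Finset.mem_Icc, hcd]))
        simp only [Finset.mem_insert, not_or]
        exact ⟨by omega, hc⟩
      · simp only [Finset.mem_insert, not_or]
        exact ⟨by omega, hd⟩

lemma runs_insert_not_mem (hI : I ⊆ Finset.Icc 1 m) (hm : m ∉ I) :
    runs (insert (m + 1) I) = insert {m + 1} (runs I) := by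
  ext R
  rw [mem_runs, Finset.mem_insert, mem_runs, isRun_insert_iff_not_mem hI hm]

lemma runs_insert_mem (hI : I ⊆ Finset.Icc 1 m) (hm : m ∈ I) {R₀ : Finset ℕ}
    (h₀ : IsRun I R₀) (hm0 : m ∈ R₀) :
    runs (insert (m + 1) I) = insert (insert (m + 1) R₀) ((runs I).erase R₀) := by
  ext R
  rw [mem_runs, Finset.mem_insert, Finset.mem_erase, mem_runs,
    isRun_insert_iff_mem hI hm h₀ hm0]
  tauto

lemma filter_runs_not_mem (hm : m ∉ I) :
    (runs I).filter (fun R => m ∉ R) = runs I := by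
  apply Finset.filter_true_of_mem
  intro R hR
  exact fun hc => hm ((mem_runs.mp hR).2.2.1 hc)

lemma filter_runs_mem {R₀ : Finset ℕ} (h₀ : IsRun I R₀) (hm0 : m ∈ R₀) :
    (runs I).filter (fun R => m ∉ R) = (runs I).erase R₀ := by
  ext R
  rw [Finset.mem_filter, Finset.mem_erase]
  constructor
  · rintro ⟨hR, hmR⟩
    exact ⟨fun heq => hmR (heq ▸ hm0), hR⟩
  · rintro ⟨hne, hR⟩
    exact ⟨hR, fun hmR => hne (run_unique (mem_runs.mp hR) h₀ hmR hm0)⟩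

lemma piFun'_eq_piFun (hm : m ∉ I) : piFun' m I = piFun I := by
  rw [piFun', filter_runs_not_mem hm, piFun]

lemma piFun_insert (hI : I ⊆ Finset.Icc 1 m) :
    piFun (insert (m + 1) I) = piFun I + piFun' m I := by
  have h0I : 0 ∉ I := zero_not_mem hI
  by_cases hm : m ∈ I
  · obtain ⟨R₀, h₀, hm0⟩ := exists_run_mem h0I hm
    have hne : m + 1 ∉ R₀ := fun hc => succ_not_mem hI (h₀.2.2.1 hc)
    have hnew : insert (m + 1) R₀ ∉ (runs I).erase R₀ := by
      intro hc
      have := (mem_runs.mp (Finset.mem_of_mem_erase hc)).2.2.1 (Finset.mem_insert_self _ _)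
      exact succ_not_mem hI this
    rw [piFun, runs_insert_mem hI hm h₀ hm0, Finset.prod_insert hnew,
      Finset.card_insert_of_notMem hne]
    have hpi : piFun I = (R₀.card + 1) * ∏ R ∈ (runs I).erase R₀, (R.card + 1) :=
      (Finset.mul_prod_erase _ _ (mem_runs.mpr h₀)).symm
    have hpi' : piFun' m I = ∏ R ∈ (runs I).erase R₀, (R.card + 1) := by
      rw [piFun', filter_runs_mem h₀ hm0]
    rw [hpi, hpi']
    ring
  · have hnew : ({m + 1} : Finset ℕ) ∉ runs I := by
      intro hc
      exact succ_not_mem hI ((mem_runs.mp hc).2.2.1 (Finset.mem_singleton_self _))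
    rw [piFun, runs_insert_not_mem hI hm, Finset.prod_insert hnew, piFun'_eq_piFun hm]
    simp [piFun]
    ring

lemma piFun'_insert (hI : I ⊆ Finset.Icc 1 m) :
    piFun' (m + 1) (insert (m + 1) I) = piFun' m I := by
  have h0I : 0 ∉ I := zero_not_mem hI
  have hfilter : ∀ (S : Finset (Finset ℕ)), (∀ R ∈ S, R ∈ runs I) →
      S.filter (fun R => m + 1 ∉ R) = S := by
    intro S hS
    apply Finset.filter_true_of_mem
    intro R hR hc
    exact succ_not_mem hI ((mem_runs.mp (hS R hR)).2.2.1 hc)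
  by_cases hm : m ∈ I
  · obtain ⟨R₀, h₀, hm0⟩ := exists_run_mem h0I hm
    rw [piFun', runs_insert_mem hI hm h₀ hm0, Finset.filter_insert,
      if_neg (by simp), hfilter _ (fun R hR => Finset.mem_of_mem_erase hR),
      piFun', filter_runs_mem h₀ hm0]
  · rw [piFun', runs_insert_not_mem hI hm, Finset.filter_insert,
      if_neg (by simp), hfilter _ (fun R hR => hR), piFun'_eq_piFun hm, piFun]

lemma runs_empty : runs (∅ : Finset ℕ) = ∅ := by
  ext R
  simp only [Finset.notMem_empty, iff_false, mem_runs]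
  rintro ⟨⟨x, hx⟩, _, hsub, _⟩
  exact Finset.notMem_empty x (hsub hx)

lemma piFun_empty : piFun (∅ : Finset ℕ) = 1 := by simp [piFun, runs_empty]

lemma piFun'_empty (k : ℕ) : piFun' k (∅ : Finset ℕ) = 1 := by simp [piFun', runs_empty]

end InsertRuns
section Main

lemma idx_congr {n : ℕ} {I J : Finset ℕ} (h : I = J) (hI : I ⊆ Finset.Icc 1 n)
    (hJ : J ⊆ Finset.Icc 1 n) : idx n I hI = idx n J hJ := by subst h; rfl

lemma Icc_one_zero : Finset.Icc 1 0 = (∅ : Finset ℕ) := by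
  apply Finset.Icc_eq_empty; omega

lemma base_entries (i j : Fin (2 ^ 0)) : A' 0 i j = 1 ∧ B' 0 i j = 1 := by
  have hd : ∀ k : Fin (2 ^ 0), decode 0 k = ∅ := by
    intro k; simp [decode, Icc_one_zero]
  have hU : ∀ a b : Fin (2 ^ 0), U 0 a b = 1 := by
    intro a b; simp [U, hd]
  have hV : ∀ a b : Fin (2 ^ 0), V 0 a b = 1 := by
    intro a b; simp [V, hd]
  have hA : ∀ a b : Fin (2 ^ 0), A 0 a b = 1 := fun a b => rfl
  have hB : ∀ a b : Fin (2 ^ 0), B 0 a b = 1 := fun a b => rfl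
  constructor <;>
    simp [A', B', Matrix.mul_apply, hU, hV, hA, hB]

lemma main_ind : ∀ (n : ℕ) (I : Finset ℕ) (hI : I ⊆ Finset.Icc 1 n),
    A' n (idx n I hI) (idx n (Finset.Icc 1 n \ I) Finset.sdiff_subset) = (piFun I : ℤ) ∧
    B' n (idx n I hI) (idx n (Finset.Icc 1 n \ I) Finset.sdiff_subset) = (piFun' n I : ℤ) := by
  intro n
  induction n with
  | zero =>
      intro I hI
      have hIe : I = ∅ := by
        rw [Icc_one_zero] at hI
        exact Finset.subset_empty.mp hI
      subst hIe
      rw [piFun_empty, piFun'_empty]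
      have := base_entries (idx 0 ∅ hI) (idx 0 (Finset.Icc 1 0 \ ∅) Finset.sdiff_subset)
      exact ⟨by rw [this.1]; norm_num, by rw [this.2]; norm_num⟩
  | succ n ih =>
      intro I hI
      by_cases hm : n + 1 ∈ I
      · -- n+1 ∈ I
        set I' := I.erase (n + 1) with hI'def
        have hI' : I' ⊆ Finset.Icc 1 n := erase_subset_Icc hI
        have hIeq : insert (n + 1) I' = I := Finset.insert_erase hm
        have hKeq : Finset.Icc 1 (n + 1) \ I = Finset.Icc 1 n \ I' := by
          ext x
          simp only [Finset.mem_sdiff, Finset.mem_Icc, Finset.mem_erase, hI'def]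
          constructor
          · rintro ⟨⟨h1, h2⟩, h3⟩
            have hxne : x ≠ n + 1 := fun hc => h3 (hc ▸ hm)
            exact ⟨⟨h1, by omega⟩, fun hc => h3 hc.2⟩
          · rintro ⟨⟨h1, h2⟩, h3⟩
            refine ⟨⟨h1, by omega⟩, fun hc => h3 ⟨by omega, hc⟩⟩
        have hrow := idx_inr hm hI
        have hcol : idx (n + 1) (Finset.Icc 1 (n + 1) \ I) Finset.sdiff_subset
            = blockEquiv n (Sum.inl (idx n (Finset.Icc 1 n \ I') Finset.sdiff_subset)) := by
          rw [idx_congr hKeq Finset.sdiff_subset (hKeq ▸ Finset.sdiff_subset)]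
          exact idx_inl Finset.sdiff_subset _
        obtain ⟨ihA, ihB⟩ := ih I' hI'
        constructor
        · rw [hrow, hcol, A'_block, Matrix.reindex_apply, Matrix.submatrix_apply,
            Equiv.symm_apply_apply, Equiv.symm_apply_apply, Matrix.fromBlocks_apply₂₁,
            Matrix.add_apply, ihA, ihB, ← hIeq, piFun_insert hI']
          push_cast
          ring
        · rw [hrow, hcol, B'_block, Matrix.reindex_apply, Matrix.submatrix_apply,
            Equiv.symm_apply_apply, Equiv.symm_apply_apply, Matrix.fromBlocks_apply₂₁,
            ihB, ← hIeq, piFun'_insert hI']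
      · -- n+1 ∉ I
        have hI' : I ⊆ Finset.Icc 1 n := by
          intro x hx
          have h1 := hI hx
          simp only [Finset.mem_Icc] at h1 ⊢
          have : x ≠ n + 1 := fun hc => hm (hc ▸ hx)
          omega
        have hmK : n + 1 ∈ Finset.Icc 1 (n + 1) \ I := by
          simp only [Finset.mem_sdiff, Finset.mem_Icc]
          exact ⟨⟨by omega, le_rfl⟩, hm⟩
        have hKeq : (Finset.Icc 1 (n + 1) \ I).erase (n + 1) = Finset.Icc 1 n \ I := by
          ext x
          simp only [Finset.mem_erase, Finset.mem_sdiff, Finset.mem_Icc]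
          constructor
          · rintro ⟨h1, ⟨h2, h3⟩, h4⟩
            exact ⟨⟨h2, by omega⟩, h4⟩
          · rintro ⟨⟨h1, h2⟩, h3⟩
            exact ⟨by omega, ⟨⟨h1, by omega⟩, h3⟩⟩
        have hrow := idx_inl hI' hI
        have hcol : idx (n + 1) (Finset.Icc 1 (n + 1) \ I) Finset.sdiff_subset
            = blockEquiv n (Sum.inr (idx n (Finset.Icc 1 n \ I) Finset.sdiff_subset)) := by
          rw [idx_inr hmK Finset.sdiff_subset]
          congr 1
          congr 1
          exact idx_congr hKeq _ _
        obtain ⟨ihA, ihB⟩ := ih I hI'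
        constructor
        · rw [hrow, hcol, A'_block, Matrix.reindex_apply, Matrix.submatrix_apply,
            Equiv.symm_apply_apply, Equiv.symm_apply_apply, Matrix.fromBlocks_apply₁₂,
            ihA]
        · rw [hrow, hcol, B'_block, Matrix.reindex_apply, Matrix.submatrix_apply,
            Equiv.symm_apply_apply, Equiv.symm_apply_apply, Matrix.fromBlocks_apply₁₂,
            ihA, piFun'_eq_piFun hm]

end Main

theorem stmt7 (n : ℕ) (I : Finset ℕ) (hI : I ⊆ Finset.Icc 1 n) :
    A' n (idx n I hI) (idx n (Finset.Icc 1 n \ I) Finset.sdiff_subset) = (piFun I : ℤ) :=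
  (main_ind n I hI).1
end AR
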